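/- Let X = {1,...,d}^ℕ, σ the shift, R_+ : X → [0,∞) Lipschitz, and I : X → [0,+∞] lower semi-continuous with I = R_+ + I∘σ. Let x ∈ X with R_+^∞(x) < +∞ and let y ∈ ω(x), the set of accumulation points of the forward orbit of x. Then I(x) = R_+^∞(x) + I(y). -/

import Mathlib

open Filter Topology

/-- The left shift map on the full shift `{1,...,d}^ℕ`. -/
def shift {d : ℕ} (x : ℕ → Fin d) : ℕ → Fin d := fun i => x (i + 1)

/-- The Birkhoff sum `R^n(x) = Σ_{j=0}^{n-1} R(σ^j x)`. -/
def birk {d : ℕ} (R : (ℕ → Fin d) → ℝ) (n : ℕ) (x : ℕ → Fin d) : ℝ :=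
  ∑ j ∈ Finset.range n, R (shift^[j] x)

/-- `y` belongs to the ω-limit set of `x`: some subsequence of iterates of `x` converges
to `y` (product topology). -/
def omegaLimitPt {d : ℕ} (x y : ℕ → Fin d) : Prop :=
  ∃ nι : ℕ → ℕ, StrictMono nι ∧ Tendsto (fun i => shift^[nι i] x) atTop (nhds y)

lemma shift_iter {d : ℕ} (x : ℕ → Fin d) (n k : ℕ) : (shift^[n] x) k = x (k + n) := by
  induction n generalizing x k with
  | zero => rfl
  | succ n ih =>
    rw [Function.iterate_succ_apply, ih]
    show x (k + n + 1) = x (k + (n + 1))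
    ring_nf

lemma birk_succ {d : ℕ} (R : (ℕ → Fin d) → ℝ) (n : ℕ) (x : ℕ → Fin d) :
    birk R (n + 1) x = R x + birk R n (shift x) := by
  unfold birk
  rw [Finset.sum_range_succ']
  simp only [Function.iterate_succ_apply, Function.iterate_zero_apply]
  ring

lemma geomb {θ : ℝ} (h0 : 0 ≤ θ) (h1 : θ < 1) (n : ℕ) :
    ∑ i ∈ Finset.range n, θ ^ i ≤ (1 - θ)⁻¹ := by
  have hs : Summable (fun i : ℕ => θ ^ i) := summable_geometric_of_lt_one h0 h1
  calc ∑ i ∈ Finset.range n, θ ^ i ≤ ∑' i : ℕ, θ ^ i :=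
        Summable.sum_le_tsum _ (fun i _ => pow_nonneg h0 i) hs
    _ = (1 - θ)⁻¹ := tsum_geometric_of_lt_one h0 h1

theorem stmt10 (d : ℕ) (hd : 1 ≤ d) (θ c : ℝ) (hθ : θ ∈ Set.Ioo (0 : ℝ) 1) (hc : 0 ≤ c)
    (R : (ℕ → Fin d) → ℝ)
    (hRnn : ∀ x, 0 ≤ R x)
    (hRlip : ∀ (x y : ℕ → Fin d) (n : ℕ), (∀ i < n, x i = y i) → |R x - R y| ≤ c * θ ^ n)
    (I : (ℕ → Fin d) → EReal)
    (hlsc : LowerSemicontinuous I)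
    (hnn : ∀ x, 0 ≤ I x)
    (hcoc : ∀ x, I x = ((R x : ℝ) : EReal) + I (shift x))
    (x y : ℕ → Fin d)
    -- `R_+^∞(x) = ⨆ n, R_+^n(x) < +∞`
    (hfin : (⨆ n, ((birk R n x : ℝ) : EReal)) < ⊤)
    (hy : omegaLimitPt x y) :
    I x = (⨆ n, ((birk R n x : ℝ) : EReal)) + I y := by
  obtain ⟨hθ0, hθ1⟩ := hθ
  obtain ⟨nι, hmono, htend⟩ := hy
  set S : EReal := ⨆ n, ((birk R n x : ℝ) : EReal) with hSdef
  -- iterated cocycle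
  have hcocn : ∀ (z : ℕ → Fin d) (n : ℕ),
      I z = ((birk R n z : ℝ) : EReal) + I (shift^[n] z) := by
    intro z n
    induction n generalizing z with
    | zero => simp [birk]
    | succ n ih =>
      rw [hcoc z, ih (shift z), birk_succ, EReal.coe_add, add_assoc,
        Function.iterate_succ_apply]
  -- S is a real number
  have hS0 : (0 : EReal) ≤ S := by
    refine le_trans ?_ (le_iSup _ 0)
    simp [birk]
  have hSbot : S ≠ ⊥ := fun h => by simp [h] at hS0
  have hStop : S ≠ ⊤ := hfin.ne
  set s : ℝ := S.toReal with hsdef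
  have hSs : S = ((s : ℝ) : EReal) := (EReal.coe_toReal hStop hSbot).symm
  have hbs : ∀ n, birk R n x ≤ s := by
    intro n
    have := le_iSup (fun n => ((birk R n x : ℝ) : EReal)) n
    rw [← hSdef, hSs] at this
    exact_mod_cast this
  -- birk is monotone in n
  have hbmono : ∀ (z : ℕ → Fin d), Monotone (fun n => birk R n z) := by
    intro z
    apply monotone_nat_of_le_succ
    intro n
    simp only [birk, Finset.sum_range_succ]
    nlinarith [hRnn (shift^[n] z)]
  -- pointwise convergence: eventual agreement on finitely many coordinates
  have hconv : ∀ j : ℕ, ∀ᶠ i in atTop, ∀ k < j, (shift^[nι i] x) k = y k := by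
    intro j
    have := (tendsto_pi_nhds).1 htend
    have h2 : ∀ k, ∀ᶠ i in atTop, (shift^[nι i] x) k = y k := by
      intro k
      have hk := this k
      rw [nhds_discrete, tendsto_pure] at hk
      exact hk
    have := (Filter.eventually_all_finset (Finset.range j)
      (p := fun k i => (shift^[nι i] x) k = y k)).2 (fun k _ => h2 k)
    filter_upwards [this] with i hi k hk
    exact hi k (Finset.mem_range.2 hk)
  -- key step for the lower bound
  have step1 : ∀ (n : ℕ) (t : EReal), t < I y → ((birk R n x : ℝ) : EReal) + t ≤ I x := by
    intro n t ht
    have hev : ∀ᶠ i in atTop, t < I (shift^[nι i] x) := htend.eventually (hlsc y t ht)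
    obtain ⟨i, hi1, hi2⟩ := (hev.and (eventually_ge_atTop n)).exists
    have hni : n ≤ nι i := le_trans hi2 (hmono.le_apply)
    calc ((birk R n x : ℝ) : EReal) + t
        ≤ ((birk R (nι i) x : ℝ) : EReal) + I (shift^[nι i] x) := by
          apply add_le_add
          · exact_mod_cast hbmono x hni
          · exact hi1.le
      _ = I x := (hcocn x (nι i)).symm
  -- lower bound
  have hlow : S + I y ≤ I x := by
    rcases eq_or_ne (I y) ⊤ with hIy | hIy
    · -- then I x = ⊤
      have hIx : I x = ⊤ := by
        rw [EReal.eq_top_iff_forall_lt]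
        intro r
        have := step1 0 ((r + 1 : ℝ) : EReal) (by rw [hIy]; exact EReal.coe_lt_top _)
        simp only [birk, Finset.range_zero, Finset.sum_empty, EReal.coe_zero, zero_add] at this
        calc ((r : ℝ) : EReal) < ((r + 1 : ℝ) : EReal) := by exact_mod_cast lt_add_one r
          _ ≤ I x := this
      rw [hIx]
      exact le_top
    · have hIyb : I y ≠ ⊥ := fun h => by simpa [h] using hnn y
      set r : ℝ := (I y).toReal with hrdef
      have hIyr : I y = ((r : ℝ) : EReal) := (EReal.coe_toReal hIy hIyb).symm
      rw [hSs, hIyr, ← EReal.coe_add]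
      apply le_of_forall_lt_imp_le_of_dense
      intro a ha
      rcases eq_or_ne a ⊥ with rfl | hab
      · exact bot_le
      have hat : a ≠ ⊤ := ne_top_of_lt ha
      set b : ℝ := a.toReal with hbdef
      have hab' : a = ((b : ℝ) : EReal) := (EReal.coe_toReal hat hab).symm
      rw [hab'] at ha ⊢
      have hbsr : b < s + r := by exact_mod_cast ha
      set ε : ℝ := (s + r - b) / 2 with hεdef
      have hε : 0 < ε := by simp only [hεdef]; linarith
      -- find n with s - ε < birk R n x
      have : ((s - ε : ℝ) : EReal) < S := by
        rw [hSs]; exact_mod_cast by linarith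
      rw [hSdef, lt_iSup_iff] at this
      obtain ⟨n, hn⟩ := this
      have hn' : s - ε < birk R n x := by exact_mod_cast hn
      have ht : ((r - ε : ℝ) : EReal) < I y := by
        rw [hIyr]; exact_mod_cast by linarith
      have := step1 n _ ht
      calc ((b : ℝ) : EReal) ≤ ((birk R n x + (r - ε) : ℝ) : EReal) := by
            exact_mod_cast by linarith
        _ = ((birk R n x : ℝ) : EReal) + ((r - ε : ℝ) : EReal) := EReal.coe_add _ _
        _ ≤ I x := this
  -- upper bound
  have hup : I x ≤ S + I y := by
    -- splice sequences
    set w : ℕ → (ℕ → Fin d) := fun m k => if k < m then x k else y (k - m) with hwdef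
    have hwshift : ∀ m, shift^[m] (w m) = y := by
      intro m
      funext k
      rw [shift_iter]
      simp only [hwdef]
      rw [if_neg (by omega)]
      congr 1
      omega
    have hwI : ∀ m, I (w m) = ((birk R m (w m) : ℝ) : EReal) + I y := by
      intro m
      rw [hcocn (w m) m, hwshift m]
    -- w m → x
    have hwx : Tendsto w atTop (𝓝 x) := by
      rw [tendsto_pi_nhds]
      intro k
      rw [nhds_discrete, tendsto_pure]
      filter_upwards [eventually_gt_atTop k] with m hm
      simp only [hwdef]
      rw [if_pos hm]
    -- the birkhoff-sum estimate under agreement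
    have hest : ∀ (j i : ℕ), (∀ k < j, (shift^[nι i] x) k = y k) →
        birk R (nι i) (w (nι i)) ≤ s + c * θ ^ j * (1 - θ)⁻¹ := by
      intro j i hagree
      set m : ℕ := nι i with hmdef
      have hterm : ∀ k < m, R (shift^[k] (w m)) ≤ R (shift^[k] x) + c * θ ^ (m - k + j) := by
        intro k hk
        have hag : ∀ l < m - k + j, (shift^[k] (w m)) l = (shift^[k] x) l := by
          intro l hl
          rw [shift_iter, shift_iter]
          simp only [hwdef]
          by_cases hlm : k + l < m
          · rw [if_pos (by omega)]
          · rw [if_neg (by omega)]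
            have h1 : l + k - m < j := by omega
            have := hagree (l + k - m) h1
            rw [shift_iter] at this
            rw [← this]
            congr 1
            omega
        have := hRlip (shift^[k] (w m)) (shift^[k] x) (m - k + j) hag
        have := abs_le.1 this
        linarith [this.2]
      have hsum : birk R m (w m) ≤ birk R m x + ∑ k ∈ Finset.range m, c * θ ^ (m - k + j) := by
        unfold birk
        rw [← Finset.sum_add_distrib]
        apply Finset.sum_le_sum
        intro k hk
        exact hterm k (Finset.mem_range.1 hk)
      have hgeom : ∑ k ∈ Finset.range m, c * θ ^ (m - k + j) ≤ c * θ ^ j * (1 - θ)⁻¹ := by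
        have h1 : ∀ k ∈ Finset.range m, c * θ ^ (m - k + j) = c * θ ^ j * θ ^ (m - k) := by
          intro k hk
          rw [pow_add]
          ring
        rw [Finset.sum_congr rfl h1, ← Finset.mul_sum]
        apply mul_le_mul_of_nonneg_left _ (by positivity)
        calc ∑ k ∈ Finset.range m, θ ^ (m - k)
            = ∑ k ∈ Finset.range m, θ ^ (k + 1) := by
              rw [← Finset.sum_range_reflect (fun k => θ ^ (k + 1)) m]
              apply Finset.sum_congr rfl
              intro k hk
              congr 1
              have := Finset.mem_range.1 hk
              omega
          _ ≤ ∑ k ∈ Finset.range m, θ ^ k := by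
              apply Finset.sum_le_sum
              intro k _
              exact pow_le_pow_of_le_one hθ0.le hθ1.le (by omega)
          _ ≤ (1 - θ)⁻¹ := geomb hθ0.le hθ1 m
      calc birk R m (w m) ≤ birk R m x + c * θ ^ j * (1 - θ)⁻¹ := by linarith
        _ ≤ s + c * θ ^ j * (1 - θ)⁻¹ := by linarith [hbs m]
    -- conclude
    apply le_of_forall_lt_imp_le_of_dense
    intro t ht
    -- for each j, find i with t < I (w (nι i)) and agreement
    have key : ∀ j : ℕ, t ≤ ((s + c * θ ^ j * (1 - θ)⁻¹ : ℝ) : EReal) + I y := by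
      intro j
      have hev1 : ∀ᶠ i in atTop, t < I (w (nι i)) := by
        have : Tendsto (fun i => w (nι i)) atTop (𝓝 x) :=
          hwx.comp (hmono.tendsto_atTop)
        exact this.eventually (hlsc x t ht)
      obtain ⟨i, hi1, hi2⟩ := (hev1.and (hconv j)).exists
      have hb := hest j i hi2
      calc t ≤ I (w (nι i)) := hi1.le
        _ = ((birk R (nι i) (w (nι i)) : ℝ) : EReal) + I y := hwI _
        _ ≤ ((s + c * θ ^ j * (1 - θ)⁻¹ : ℝ) : EReal) + I y := by
            apply add_le_add_left
            exact_mod_cast hb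
    rcases eq_or_ne (I y) ⊤ with hIy | hIy
    · rw [hIy]
      rw [EReal.add_top_of_ne_bot hSbot]
      exact le_top
    · have hIyb : I y ≠ ⊥ := fun h => by simpa [h] using hnn y
      set r : ℝ := (I y).toReal with hrdef
      have hIyr : I y = ((r : ℝ) : EReal) := (EReal.coe_toReal hIy hIyb).symm
      rw [hSs, hIyr, ← EReal.coe_add]
      rcases eq_or_ne t ⊥ with rfl | htb
      · exact bot_le
      have htt : t ≠ ⊤ := by
        intro h
        have := key 0
        rw [h, hIyr, ← EReal.coe_add, top_le_iff] at this
        exact EReal.coe_ne_top _ this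
      set b : ℝ := t.toReal with hbdef
      have htb' : t = ((b : ℝ) : EReal) := (EReal.coe_toReal htt htb).symm
      rw [htb']
      apply EReal.coe_le_coe_iff.2
      have hble : ∀ j : ℕ, b ≤ s + c * θ ^ j * (1 - θ)⁻¹ + r := by
        intro j
        have := key j
        rw [htb', hIyr, ← EReal.coe_add] at this
        exact_mod_cast this
      have hlim : Tendsto (fun j : ℕ => s + c * θ ^ j * (1 - θ)⁻¹ + r) atTop
          (𝓝 (s + c * 0 * (1 - θ)⁻¹ + r)) := by
        apply Tendsto.add_const
        apply Tendsto.const_add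
        exact (((tendsto_pow_atTop_nhds_zero_of_lt_one hθ0.le hθ1).const_mul c).mul_const _)
      have := ge_of_tendsto hlim (Eventually.of_forall hble)
      simpa using this
  exact le_antisymm hup hlow
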